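/- In the dihedral group $D_{2m}$ with $m\ge 3$ odd, any two distinct reflections $xy^i$ and $xy^j$ ($0\le i< j\le m-1$) satisfy $[xy^i,{}_n\,xy^j]\ne 1$ for all positive integers $n$; hence the co-Engel relation holds between any two distinct reflections. -/
import Mathlib


/-- The commutator `[a,b] = a⁻¹ b⁻¹ a b` (paper convention). -/
def cm {G : Type*} [Group G] (a b : G) : G := a⁻¹ * b⁻¹ * a * b

/-- Iterated (Engel) commutator: `engel a b 0 = a`, `engel a b (n+1) = [engel a b n, b]`,
so for `n ≥ 1`, `engel a b n = [a, ₙ b]`. -/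
def engel {G : Type*} [Group G] (a b : G) : ℕ → G
  | 0 => a
  | n + 1 => cm (engel a b n) b

lemma inv_sr {m : ℕ} (a : ZMod m) : (DihedralGroup.sr a)⁻¹ = DihedralGroup.sr a :=
  inv_eq_of_mul_eq_one_right (DihedralGroup.sr_mul_self a)

lemma inv_r {m : ℕ} (a : ZMod m) : (DihedralGroup.r a)⁻¹ = DihedralGroup.r (-a) :=
  inv_eq_of_mul_eq_one_right (by rw [DihedralGroup.r_mul_r, add_neg_cancel]; rfl)

lemma cm_sr_sr {m : ℕ} (a b : ZMod m) :
    cm (DihedralGroup.sr a) (DihedralGroup.sr b) = DihedralGroup.r (2 * (b - a)) := by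
  simp [cm, inv_sr, DihedralGroup.sr_mul_sr, DihedralGroup.r_mul_sr]
  congr 1; ring

lemma cm_r_sr {m : ℕ} (k b : ZMod m) :
    cm (DihedralGroup.r k) (DihedralGroup.sr b) = DihedralGroup.r (-2 * k) := by
  simp [cm, inv_r, inv_sr, DihedralGroup.r_mul_sr, DihedralGroup.sr_mul_r, DihedralGroup.sr_mul_sr]
  congr 1; ring

lemma engel_formula {m : ℕ} (a b : ZMod m) (n : ℕ) :
    engel (DihedralGroup.sr a) (DihedralGroup.sr b) (n + 1)
      = DihedralGroup.r ((-2) ^ n * (2 * (b - a))) := by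
  induction n with
  | zero => simp [engel, cm_sr_sr]
  | succ n ih =>
      show cm _ _ = _
      rw [ih, cm_r_sr]
      congr 1; ring

theorem stmt18 (m : ℕ) (hm : 3 ≤ m) (hodd : Odd m) (i j : ℕ)
    (hij : i < j) (hj : j ≤ m - 1) :
    ∀ n, 1 ≤ n →
      engel (DihedralGroup.sr (i : ZMod m)) (DihedralGroup.sr (j : ZMod m)) n ≠ 1 := by
  have hm0 : 0 < m := by omega
  have hd : ((j : ZMod m) - (i : ZMod m)) ≠ 0 := by
    intro h
    have : ((j - i : ℕ) : ZMod m) = 0 := by rw [Nat.cast_sub hij.le]; exact h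
    rw [ZMod.natCast_eq_zero_iff] at this
    have := Nat.le_of_dvd (by omega) this
    omega
  have h2 : IsUnit (2 : ZMod m) := by
    haveI : NeZero m := ⟨by omega⟩
    have : ((2 : ℕ) : ZMod m) = (2 : ZMod m) := by norm_num
    rw [← this, ZMod.isUnit_iff_coprime]
    rcases hodd with ⟨k, rfl⟩
    simpa [Nat.coprime_two_left] using (by omega : Odd (2 * k + 1))
  rintro (_ | n) hn
  · omega
  rw [engel_formula]
  intro h
  rw [DihedralGroup.one_def, DihedralGroup.r.injEq] at h
  have hu : IsUnit ((-2 : ZMod m) ^ n * 2) := (h2.neg.pow n).mul h2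
  apply hd
  refine hu.mul_left_cancel (b := (j : ZMod m) - (i : ZMod m)) (c := 0) ?_
  rw [mul_zero]; linear_combination h
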